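/- arXiv:2207.12382 — 5 statements merged into one kernel-verified Lean document; each statement's English description precedes it below -/
import Mathlib

section
/- Suppose $\{o_1 \mathbf{e}_1, \dots, o_K \mathbf{e}_K\} \subseteq \mathcal{M} \subseteq \mathbb{R}_{\ge 0}^K$ for some positive odds $o_1, \dots, o_K$. Let $(\Psi_t : \mathcal{M}^t \to \mathbb{R}_{\ge 0})$ be nonnegative functions satisfying (A1) consistency: $\Psi_{t-1}(\mathbf{x}^{t-1}) \ge \sum_{j=1}^K \frac{1}{o_j} \Psi_t(\mathbf{x}^{t-1} \circ o_j \mathbf{e}_j)$ for all $t, \mathbf{x}^{t-1}$; and (A2) convexity: $\sum_{j=1}^K \frac{x_{tj}}{o_j} \Psi_t(\mathbf{x}^{t-1} \circ o_j \mathbf{e}_j) \ge \Psi_t(\mathbf{x}^t)$ for all $t, \mathbf{x}^t$. Then there exists a causal betting strategy $\mathbf{b}_t(\mathbf{x}^{t-1}) \in \Delta_{K-1}$ whose wealth satisfies $W_t(\mathbf{x}^t) \ge W_0 \Psi_t(\mathbf{x}^t)$ for every market sequence $\mathbf{x}^t \in \mathcal{M}^t$ (assuming $\Psi_0 \le 1$).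 -/
/-- Achievability: if nonnegative potentials `Ψ t` satisfy the consistency
condition (A1) and the convexity condition (A2), and `Ψ 0 ≤ 1`, then there is
a causal betting strategy whose wealth `W0 * ∏_i ⟨b_i, x_i⟩` is at least
`W0 * Ψ t x` for every market sequence in `M`. -/
theorem achievable_wealth_of_potentials {K : ℕ} (hK : 0 < K)
    (M : Set (Fin K → ℝ)) (hMnn : M ⊆ {v | ∀ j, 0 ≤ v j})
    (o : Fin K → ℝ) (ho : ∀ j, 0 < o j)
    (hbasis : ∀ j, Pi.single j (o j) ∈ M)
    (Ψ : (t : ℕ) → (Fin t → (Fin K → ℝ)) → ℝ)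
    (hΨnn : ∀ t x, 0 ≤ Ψ t x)
    (hΨ0 : Ψ 0 (fun i => i.elim0) ≤ 1)
    (hA1 : ∀ (t : ℕ) (x : Fin t → (Fin K → ℝ)), (∀ i, x i ∈ M) →
      ∑ j, (1 / o j) * Ψ (t + 1) (Fin.snoc x (Pi.single j (o j))) ≤ Ψ t x)
    (hA2 : ∀ (t : ℕ) (x : Fin (t + 1) → (Fin K → ℝ)), (∀ i, x i ∈ M) →
      Ψ (t + 1) x ≤
        ∑ j, (x (Fin.last t) j / o j) * Ψ (t + 1) (Fin.snoc (Fin.init x) (Pi.single j (o j))))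
    (W0 : ℝ) (hW0 : 0 < W0) :
    ∃ b : (t : ℕ) → (Fin t → (Fin K → ℝ)) → (Fin K → ℝ),
      (∀ t x, (∀ j, 0 ≤ b t x j) ∧ ∑ j, b t x j = 1) ∧
      ∀ (t : ℕ) (x : Fin t → (Fin K → ℝ)), (∀ i, x i ∈ M) →
        W0 * Ψ t x ≤
          W0 * ∏ i : Fin t,
            ∑ j, b i.val (fun k : Fin i.val => x ⟨k.val, k.2.trans i.2⟩) j * x i j := by
  classical
  set e0 : Fin K := ⟨0, hK⟩ with he0
  set c : (t : ℕ) → (Fin t → (Fin K → ℝ)) → Fin K → ℝ :=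
    fun t x j => (1 / o j) * Ψ (t + 1) (Fin.snoc x (Pi.single j (o j))) / Ψ t x with hc
  have hcnn : ∀ t x j, 0 ≤ c t x j := by
    intro t x j
    exact div_nonneg (mul_nonneg (div_nonneg zero_le_one (ho j).le) (hΨnn _ _)) (hΨnn _ _)
  have hcsum : ∀ t x, (∀ i, x i ∈ M) → 0 < Ψ t x → ∑ j, c t x j ≤ 1 := by
    intro t x hM hpos
    rw [hc]
    simp only
    rw [← Finset.sum_div]
    exact div_le_one_of_le₀ (hA1 t x hM) (hΨnn _ _)
  set b : (t : ℕ) → (Fin t → (Fin K → ℝ)) → Fin K → ℝ :=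
    fun t x j => if (∀ i, x i ∈ M) ∧ 0 < Ψ t x then
      c t x j + (if j = e0 then 1 - ∑ j', c t x j' else 0)
    else (if j = e0 then 1 else 0) with hb
  have hbnn : ∀ t x j, 0 ≤ b t x j := by
    intro t x j
    rw [hb]
    simp only
    split_ifs with h h2 h3
    · have := hcsum t x h.1 h.2
      have := hcnn t x j
      linarith
    · simpa using hcnn t x j
    · exact zero_le_one
    · exact le_refl 0
  have hbsum : ∀ t x, ∑ j, b t x j = 1 := by
    intro t x
    rw [hb]
    simp only
    split_ifs with h
    · rw [Finset.sum_add_distrib, Finset.sum_ite_eq' Finset.univ e0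
        (fun _ => 1 - ∑ j', c t x j')]
      simp
    · rw [Finset.sum_ite_eq' Finset.univ e0 (fun _ => (1:ℝ))]
      simp
  -- the one-step key inequality
  have key : ∀ (t : ℕ) (x : Fin (t + 1) → (Fin K → ℝ)), (∀ i, x i ∈ M) →
      Ψ (t + 1) x ≤ Ψ t (Fin.init x) * ∑ j, b t (Fin.init x) j * x (Fin.last t) j := by
    intro t x hM
    have hiM : ∀ i, Fin.init x i ∈ M := fun i => hM _
    have hxnn : ∀ j, 0 ≤ x (Fin.last t) j := hMnn (hM _)
    by_cases hpos : 0 < Ψ t (Fin.init x)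
    · have hbx : ∀ j, b t (Fin.init x) j = c t (Fin.init x) j +
          (if j = e0 then 1 - ∑ j', c t (Fin.init x) j' else 0) := by
        intro j; rw [hb]; simp only [if_pos (And.intro hiM hpos)]
      have h1 : ∑ j, c t (Fin.init x) j * x (Fin.last t) j ≤
          ∑ j, b t (Fin.init x) j * x (Fin.last t) j := by
        apply Finset.sum_le_sum
        intro j _
        rw [hbx j]
        have hrem : (0:ℝ) ≤ (if j = e0 then 1 - ∑ j', c t (Fin.init x) j' else 0) := by
          split_ifs with hj
          · have := hcsum t (Fin.init x) hiM hpos; linarith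
          · exact le_refl 0
        nlinarith [hxnn j]
      have h2 : Ψ (t + 1) x ≤ Ψ t (Fin.init x) * ∑ j, c t (Fin.init x) j * x (Fin.last t) j := by
        calc Ψ (t + 1) x ≤
            ∑ j, (x (Fin.last t) j / o j) * Ψ (t + 1) (Fin.snoc (Fin.init x) (Pi.single j (o j))) :=
              hA2 t x hM
          _ = Ψ t (Fin.init x) * ∑ j, c t (Fin.init x) j * x (Fin.last t) j := by
              rw [Finset.mul_sum]
              apply Finset.sum_congr rfl
              intro j _
              have hcj : c t (Fin.init x) j * Ψ t (Fin.init x) =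
                  (1 / o j) * Ψ (t + 1) (Fin.snoc (Fin.init x) (Pi.single j (o j))) :=
                div_mul_cancel₀ _ hpos.ne'
              rw [show Ψ t (Fin.init x) * (c t (Fin.init x) j * x (Fin.last t) j)
                  = (c t (Fin.init x) j * Ψ t (Fin.init x)) * x (Fin.last t) j from by ring, hcj]
              ring
      calc Ψ (t + 1) x ≤ Ψ t (Fin.init x) * ∑ j, c t (Fin.init x) j * x (Fin.last t) j := h2
        _ ≤ Ψ t (Fin.init x) * ∑ j, b t (Fin.init x) j * x (Fin.last t) j :=
            mul_le_mul_of_nonneg_left h1 (hΨnn _ _)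
    · have hzero : Ψ t (Fin.init x) = 0 := le_antisymm (not_lt.mp hpos) (hΨnn _ _)
      have hterm : ∀ j, Ψ (t + 1) (Fin.snoc (Fin.init x) (Pi.single j (o j))) = 0 := by
        have hsum := hA1 t (Fin.init x) hiM
        rw [hzero] at hsum
        intro j
        have hall : ∀ j' ∈ Finset.univ, (0:ℝ) ≤
            (1 / o j') * Ψ (t + 1) (Fin.snoc (Fin.init x) (Pi.single j' (o j'))) :=
          fun j' _ => mul_nonneg (div_nonneg zero_le_one (ho j').le) (hΨnn _ _)
        have := (Finset.sum_eq_zero_iff_of_nonneg hall).mp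
          (le_antisymm hsum (Finset.sum_nonneg hall)) j (Finset.mem_univ j)
        have hoj : (1 / o j) ≠ 0 := one_div_ne_zero (ho j).ne'
        exact (mul_eq_zero.mp this).resolve_left hoj
      have hΨx : Ψ (t + 1) x ≤ 0 := by
        calc Ψ (t + 1) x ≤
            ∑ j, (x (Fin.last t) j / o j) * Ψ (t + 1) (Fin.snoc (Fin.init x) (Pi.single j (o j))) :=
              hA2 t x hM
          _ = 0 := Finset.sum_eq_zero (fun j _ => by rw [hterm j, mul_zero])
      rw [hzero, zero_mul]
      exact hΨx
  -- the main induction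
  have core : ∀ (t : ℕ) (x : Fin t → (Fin K → ℝ)), (∀ i, x i ∈ M) →
      Ψ t x ≤ ∏ i : Fin t,
        ∑ j, b i.val (fun k : Fin i.val => x ⟨k.val, k.2.trans i.2⟩) j * x i j := by
    intro t
    induction t with
    | zero =>
        intro x _
        have hx : x = fun i => i.elim0 := funext fun i => i.elim0
        rw [hx, Finset.univ_eq_empty, Finset.prod_empty]
        exact hΨ0
    | succ t ih =>
        intro x hM
        have hiM : ∀ i, Fin.init x i ∈ M := fun i => hM _
        rw [Fin.prod_univ_castSucc]
        have hprodeq : (∏ i : Fin t, ∑ j, b (Fin.castSucc i).val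
              (fun k : Fin (Fin.castSucc i).val => x ⟨k.val, k.2.trans (Fin.castSucc i).2⟩) j
              * x (Fin.castSucc i) j)
            = ∏ i : Fin t, ∑ j, b i.val
              (fun k : Fin i.val => Fin.init x ⟨k.val, k.2.trans i.2⟩) j * Fin.init x i j := by
          apply Finset.prod_congr rfl
          intro i _
          apply Finset.sum_congr rfl
          intro j _
          congr 1
        rw [hprodeq]
        have hlast : (∑ j, b (Fin.last t).val
              (fun k : Fin (Fin.last t).val => x ⟨k.val, k.2.trans (Fin.last t).2⟩) j
              * x (Fin.last t) j)
            = ∑ j, b t (Fin.init x) j * x (Fin.last t) j := by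
          apply Finset.sum_congr rfl
          intro j _
          congr 1
        rw [hlast]
        have hSnn : 0 ≤ ∑ j, b t (Fin.init x) j * x (Fin.last t) j :=
          Finset.sum_nonneg fun j _ => mul_nonneg (hbnn _ _ _) (hMnn (hM _) j)
        calc Ψ (t + 1) x ≤ Ψ t (Fin.init x) * ∑ j, b t (Fin.init x) j * x (Fin.last t) j :=
              key t x hM
          _ ≤ (∏ i : Fin t, ∑ j, b i.val
                (fun k : Fin i.val => Fin.init x ⟨k.val, k.2.trans i.2⟩) j * Fin.init x i j)
              * ∑ j, b t (Fin.init x) j * x (Fin.last t) j :=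
              mul_le_mul_of_nonneg_right (ih (Fin.init x) hiM) hSnn
  exact ⟨b, fun t x => ⟨hbnn t x, hbsum t x⟩,
    fun t x hM => mul_le_mul_of_nonneg_left (core t x hM) hW0.le⟩
end

section
/- Conversely, if $W_0 \Psi_t(\mathbf{x}^t)$ is exactly the wealth achieved by some causal betting strategy in the multiplicative game with market set $\mathcal{M} \supseteq \{o_1\mathbf{e}_1,\dots,o_K\mathbf{e}_K\}$, then the functions $\Psi_t$ satisfy, with equality, both the consistency condition $\Psi_{t-1}(\mathbf{x}^{t-1}) = \sum_{j=1}^K \frac{1}{o_j} \Psi_t(\mathbf{x}^{t-1} \circ o_j \mathbf{e}_j)$ and the convexity condition $\sum_{j=1}^K \frac{x_{tj}}{o_j} \Psi_t(\mathbf{x}^{t-1} \circ o_j \mathbf{e}_j) = \Psi_t(\mathbf{x}^t)$. -/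
lemma psi_step {K : ℕ}
    (b : (t : ℕ) → (Fin t → (Fin K → ℝ)) → (Fin K → ℝ))
    (Ψ : (t : ℕ) → (Fin t → (Fin K → ℝ)) → ℝ)
    (hΨ : ∀ (t : ℕ) (x : Fin t → (Fin K → ℝ)),
      Ψ t x = ∏ i : Fin t,
        ∑ j, b i.val (fun k : Fin i.val => x ⟨k.val, k.2.trans i.2⟩) j * x i j)
    (t : ℕ) (x : Fin (t + 1) → (Fin K → ℝ)) :
    Ψ (t + 1) x = Ψ t (Fin.init x) *
      ∑ j, b t (Fin.init x) j * x (Fin.last t) j := by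
  rw [hΨ, hΨ, Fin.prod_univ_castSucc]
  rfl

/-- Converse: if `W0 * Ψ t x` is exactly the wealth of a causal betting
strategy `b` with values in the simplex, then the potentials `Ψ t` satisfy the
consistency (A1) and convexity (A2) conditions with equality. -/
theorem potentials_of_achieved_wealth {K : ℕ}
    (M : Set (Fin K → ℝ)) (o : Fin K → ℝ) (ho : ∀ j, 0 < o j)
    (hbasis : ∀ j, Pi.single j (o j) ∈ M)
    (b : (t : ℕ) → (Fin t → (Fin K → ℝ)) → (Fin K → ℝ))
    (hb : ∀ t x, (∀ j, 0 ≤ b t x j) ∧ ∑ j, b t x j = 1)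
    (Ψ : (t : ℕ) → (Fin t → (Fin K → ℝ)) → ℝ)
    (hΨ : ∀ (t : ℕ) (x : Fin t → (Fin K → ℝ)),
      Ψ t x = ∏ i : Fin t,
        ∑ j, b i.val (fun k : Fin i.val => x ⟨k.val, k.2.trans i.2⟩) j * x i j) :
    (∀ (t : ℕ) (x : Fin t → (Fin K → ℝ)), (∀ i, x i ∈ M) →
      Ψ t x = ∑ j, (1 / o j) * Ψ (t + 1) (Fin.snoc x (Pi.single j (o j)))) ∧
    (∀ (t : ℕ) (x : Fin (t + 1) → (Fin K → ℝ)), (∀ i, x i ∈ M) →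
      ∑ j, (x (Fin.last t) j / o j) * Ψ (t + 1) (Fin.snoc (Fin.init x) (Pi.single j (o j)))
        = Ψ (t + 1) x) := by
  have hsingle : ∀ (t : ℕ) (x : Fin t → (Fin K → ℝ)) (j0 : Fin K),
      Ψ (t + 1) (Fin.snoc x (Pi.single j0 (o j0)))
        = Ψ t x * (b t x j0 * o j0) := by
    intro t x j0
    rw [psi_step b Ψ hΨ, Fin.init_snoc, Fin.snoc_last]
    congr 1
    rw [Finset.sum_eq_single j0]
    · rw [Pi.single_eq_same]
    · intro j _ hj
      rw [Pi.single_eq_of_ne hj, mul_zero]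
    · intro h; exact absurd (Finset.mem_univ j0) h
  constructor
  · intro t x _
    have h := (hb t x).2
    simp only [hsingle]
    have key : ∀ j : Fin K, (1 / o j) * (Ψ t x * (b t x j * o j))
        = Ψ t x * b t x j := by
      intro j
      field_simp [(ho j).ne']
    rw [Finset.sum_congr rfl fun j _ => key j, ← Finset.mul_sum, h, mul_one]
  · intro t x _
    simp only [hsingle]
    rw [psi_step b Ψ hΨ t x, Finset.mul_sum]
    apply Finset.sum_congr rfl
    intro j _
    field_simp [(ho j).ne']
end

section
/- For any integer $\ell \ge 1$, define $f_\ell(t) := \big(\log(1+t) - \sum_{k=1}^{\ell-1}(-1)^{k+1} t^k/k\big) \big/ \big((-1)^\ell t^\ell / \ell\big)$ for $t > -1$, $t \ne 0$, and $f_\ell(0) := -1$. Then $f_\ell$ is continuous and strictly increasing on $(-1, \infty)$. -/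
/-!
Differentiating the Taylor remainder `R(x) = log (1 + x) - ∑_{k=1}^{n} (-1)^(k+1) x^k / k` gives
`(-x)^n / (1 + x)`, so `R(x) = ∫_0^x (-t)^n / (1 + t) dt`, and the substitution `t = x s` turns
this into `R(x) = (-1)^n x^(n+1) ∫_0^1 s^n / (1 + x s) ds`. Hence, with `l = n + 1`,
`f(x) = -l ∫_0^1 s^n / (1 + x s) ds` for every `x > -1` (at `x = 0` both sides are `-1`).
The integrand is positive and strictly decreasing in `x`, which makes `f` strictly increasing,
and continuity follows by dominated convergence since `1 + x s` stays away from `0` locally.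
-/

open Set Filter MeasureTheory intervalIntegral

noncomputable def logRemainder (n : ℕ) (x : ℝ) : ℝ :=
  Real.log (1 + x) - ∑ k ∈ Finset.Icc 1 n, (-1 : ℝ) ^ (k + 1) * x ^ k / k

noncomputable def logRemainderIntegral (n : ℕ) (x : ℝ) : ℝ :=
  ∫ s in (0 : ℝ)..1, s ^ n / (1 + x * s)

lemma min_one_le_one_add_mul {a x s : ℝ} (hax : a ≤ x) (hs0 : 0 ≤ s) (hs1 : s ≤ 1) :
    min 1 (1 + a) ≤ 1 + x * s := by
  rcases le_total 0 a with ha | ha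
  · nlinarith [min_le_left 1 (1 + a)]
  · nlinarith [min_le_right 1 (1 + a)]

lemma one_add_mul_pos {x s : ℝ} (hx : -1 < x) (hs0 : 0 ≤ s) (hs1 : s ≤ 1) :
    0 < 1 + x * s :=
  (lt_min one_pos (by linarith)).trans_le (min_one_le_one_add_mul le_rfl hs0 hs1)

lemma logRemainder_zero_left (x : ℝ) : logRemainder 0 x = Real.log (1 + x) := by
  simp [logRemainder]

lemma logRemainder_succ (n : ℕ) (x : ℝ) :
    logRemainder (n + 1) x = logRemainder n x - (-1) ^ (n + 2) * x ^ (n + 1) / (n + 1 : ℕ) := by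
  rw [logRemainder, logRemainder, Finset.sum_Icc_succ_top (by omega)]
  ring

lemma logRemainder_zero_right (n : ℕ) : logRemainder n 0 = 0 := by
  induction n with
  | zero => simp [logRemainder]
  | succ n ih => simp [logRemainder_succ, ih]

lemma hasDerivAt_logRemainder (n : ℕ) {x : ℝ} (hx : -1 < x) :
    HasDerivAt (logRemainder n) ((-x) ^ n / (1 + x)) x := by
  have hx' : 1 + x ≠ 0 := by linarith
  induction n with
  | zero =>
    simpa [funext logRemainder_zero_left] using ((hasDerivAt_id x).const_add 1).log hx'
  | succ n ih =>
    rw [funext (logRemainder_succ n)]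
    refine (ih.fun_sub (((hasDerivAt_pow (n + 1) x).const_mul ((-1 : ℝ) ^ (n + 2))).div_const
      ((n + 1 : ℕ) : ℝ))).congr_deriv ?_
    have hn : ((n + 1 : ℕ) : ℝ) ≠ 0 := by positivity
    rw [Nat.add_sub_cancel]
    field_simp
    rw [neg_pow, neg_pow x]
    ring

lemma logRemainder_eq_integral (n : ℕ) {x : ℝ} (hx : -1 < x) :
    logRemainder n x = ∫ t in (0 : ℝ)..x, (-t) ^ n / (1 + t) := by
  have hmem : ∀ t ∈ uIcc 0 x, -1 < t := fun t ht =>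
    (lt_min (by norm_num) hx).trans_le ht.1
  rw [integral_eq_sub_of_hasDerivAt (fun t ht => hasDerivAt_logRemainder n (hmem t ht)),
    logRemainder_zero_right, sub_zero]
  refine ContinuousOn.intervalIntegrable (ContinuousOn.div (by fun_prop) (by fun_prop) ?_)
  intro t ht
  linarith [hmem t ht]

lemma logRemainder_eq_mul_logRemainderIntegral (n : ℕ) {x : ℝ} (hx : -1 < x) :
    logRemainder n x = (-1) ^ n * x ^ (n + 1) * logRemainderIntegral n x := by
  rw [logRemainder_eq_integral n hx, logRemainderIntegral]
  have := smul_integral_comp_mul_left (a := 0) (b := 1) (fun t : ℝ => (-t) ^ n / (1 + t)) x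
  simp only [mul_zero, mul_one, smul_eq_mul] at this
  rw [← this]
  have hint : ∀ s : ℝ, (-(x * s)) ^ n / (1 + x * s) = (-x) ^ n * (s ^ n / (1 + x * s)) :=
    fun s => by rw [← neg_mul, mul_pow, mul_div_assoc]
  simp only [hint, intervalIntegral.integral_const_mul, neg_pow x]
  ring

lemma logRemainderIntegral_zero_right (n : ℕ) : logRemainderIntegral n 0 = 1 / (n + 1) := by
  simp [logRemainderIntegral, integral_pow]

lemma continuousOn_logRemainderIntegral (n : ℕ) :
    ContinuousOn (logRemainderIntegral n) (Ioi (-1)) := by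
  intro x₀ hx₀
  obtain ⟨a, ha, hax⟩ := exists_between (mem_Ioi.1 hx₀)
  have hm : 0 < min 1 (1 + a) := lt_min one_pos (by linarith)
  refine (continuousAt_of_dominated_interval (bound := fun _ => (min 1 (1 + a))⁻¹)
    (Eventually.of_forall fun x => (by fun_prop : Measurable _).aestronglyMeasurable) ?_ intervalIntegrable_const ?_).continuousWithinAt
  · filter_upwards [Ioi_mem_nhds hax] with x hx
    refine ae_of_all _ fun s hs => ?_
    rw [uIoc_of_le zero_le_one] at hs
    have hden := min_one_le_one_add_mul (le_of_lt hx) hs.1.le hs.2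
    rw [Real.norm_eq_abs, abs_of_nonneg (div_nonneg (pow_nonneg hs.1.le n) (hm.trans_le hden).le), div_le_iff₀ (hm.trans_le hden)]
    calc s ^ n ≤ 1 := pow_le_one₀ hs.1.le hs.2
      _ ≤ (min 1 (1 + a))⁻¹ * (1 + x * s) := by
        rw [inv_mul_eq_div, one_le_div hm]; exact hden
  · refine ae_of_all _ fun s hs => ?_
    rw [uIoc_of_le zero_le_one] at hs
    have := one_add_mul_pos (mem_Ioi.1 hx₀) hs.1.le hs.2
    fun_prop (disch := positivity)

lemma strictAntiOn_logRemainderIntegral (n : ℕ) :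
    StrictAntiOn (logRemainderIntegral n) (Ioi (-1)) := by
  intro x hx y hy hxy
  have hcont : ∀ z ∈ Ioi (-1 : ℝ), ContinuousOn (fun s : ℝ => s ^ n / (1 + z * s)) (Icc 0 1) :=
    fun z hz => ContinuousOn.div (by fun_prop) (by fun_prop)
      fun s hs => (one_add_mul_pos hz hs.1 hs.2).ne'
  refine integral_lt_integral_of_continuousOn_of_le_of_exists_lt zero_lt_one (hcont y hy)
    (hcont x hx) (fun s hs => ?_) ⟨1, right_mem_Icc.2 zero_le_one, ?_⟩
  · exact div_le_div_of_nonneg_left (pow_nonneg hs.1.le n)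
      (one_add_mul_pos hx hs.1.le hs.2) (by nlinarith [hs.1])
  · have : (0 : ℝ) < 1 + x := by linarith [mem_Ioi.1 hx]
    simpa using one_div_lt_one_div_of_lt this (by linarith)

/-- Higher-order generalization of Fan–Grama–Liu: for integer `ℓ ≥ 1`, the
function `f_ℓ(t) = (log(1+t) - ∑_{k=1}^{ℓ-1} (-1)^{k+1} t^k/k) / ((-1)^ℓ t^ℓ/ℓ)`
for `t > -1`, `t ≠ 0`, extended by `f_ℓ(0) = -1`, is continuous and strictly
increasing on `(-1, ∞)`. -/
theorem fan_generalization_monotone (l : ℕ) (hl : 1 ≤ l) (f : ℝ → ℝ)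
    (hf : ∀ x : ℝ, -1 < x → x ≠ 0 →
      f x = (Real.log (1 + x) - ∑ k ∈ Finset.Icc 1 (l - 1), (-1 : ℝ) ^ (k + 1) * x ^ k / k) /
        ((-1 : ℝ) ^ l * x ^ l / l))
    (hf0 : f 0 = -1) :
    ContinuousOn f (Set.Ioi (-1 : ℝ)) ∧ StrictMonoOn f (Set.Ioi (-1 : ℝ)) := by
  obtain ⟨n, rfl⟩ : ∃ n, l = n + 1 := ⟨l - 1, by omega⟩
  have hf_eq : EqOn f (fun x => -(n + 1 : ℝ) * logRemainderIntegral n x) (Ioi (-1)) := by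
    intro x hx
    rcases eq_or_ne x 0 with rfl | hx0
    · rw [hf0]
      simp only [logRemainderIntegral_zero_right]
      field_simp
    · rw [hf x hx hx0, Nat.add_sub_cancel]
      change logRemainder n x / _ = _
      rw [logRemainder_eq_mul_logRemainderIntegral n hx]
      field_simp
      push_cast
      ring
  refine ⟨(continuousOn_const.mul (continuousOn_logRemainderIntegral n)).congr hf_eq, ?_⟩
  intro x hx y hy hxy
  rw [hf_eq hx, hf_eq hy]
  exact mul_lt_mul_of_neg_left (strictAntiOn_logRemainderIntegral n hx hy hxy) (by linarith)
end

section
/- For any positive integer $n$, $m \in (0,1)$, $b \in [m,1)$, and $y \ge 0$: $\log\left(b\frac{y}{m} + (1-b)\frac{1-y}{1-m}\right) \ge \sum_{k=1}^{2n-1} \frac{1}{k}\left(1 - \frac{1-b}{1-m}\right)^k \left\{\left(1-\frac{y}{m}\right)^{2n} - \left(1-\frac{y}{m}\right)^k\right\} + \left(1-\frac{y}{m}\right)^{2n} \log\frac{1-b}{1-m}$ (provided the argument of the outer logarithm is positive). -/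
/-!
For odd `K`, the remainder `g(t) = log (1 + t) - ∑_{k=1}^{K} (-1)^(k+1) t^k / k` satisfies
`g(t) = ∫₀ᵗ (-s)^K / (1 + s) ds = -t^(K+1) ∫₀¹ r^K / (1 + t r) dr`, so `g(t) / t^(K+1)` is
increasing on `(-1, ∞)` (this is the paper's `f_{2n}` up to the factor `2n`). With
`x₀ = (m - b)/(1 - m)` and `u = 1 - y/m`, the point `u x₀` lies in `[x₀, ∞)`; multiplying the
monotonicity by `(u x₀)^(K+1) ≥ 0` gives `u^(K+1) g(x₀) ≤ g(u x₀)`, which expands to the claim.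
-/

open Set Finset intervalIntegral

noncomputable def logTaylorRemainder (K : ℕ) (t : ℝ) : ℝ :=
  Real.log (1 + t) - ∑ k ∈ Icc 1 K, (-1 : ℝ) ^ (k + 1) * t ^ k / k

lemma hasDerivAt_sum_Icc_pow_div (K : ℕ) (t : ℝ) :
    HasDerivAt (fun s : ℝ => ∑ k ∈ Icc 1 K, (-1 : ℝ) ^ (k + 1) * s ^ k / k)
      (∑ j ∈ range K, (-t) ^ j) t := by
  induction K with
  | zero => simpa using hasDerivAt_const t (0 : ℝ)
  | succ K ih =>
    simp only [sum_Icc_succ_top (Nat.le_add_left 1 K), sum_range_succ]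
    refine (ih.add (((hasDerivAt_pow (K + 1) t).const_mul ((-1 : ℝ) ^ (K + 1 + 1))).div_const
      ((K + 1 : ℕ) : ℝ))).congr_deriv ?_
    push_cast
    rw [neg_pow]
    field_simp
    ring

lemma hasDerivAt_logTaylorRemainder (K : ℕ) {t : ℝ} (ht : -1 < t) :
    HasDerivAt (logTaylorRemainder K) ((-t) ^ K / (1 + t)) t := by
  have h1t : 1 + t ≠ 0 := by linarith
  have h1t' : -t - 1 ≠ 0 := by linarith
  have hlog : HasDerivAt (fun s : ℝ => Real.log (1 + s)) (1 / (1 + t)) t := by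
    simpa using ((hasDerivAt_id t).const_add 1).log h1t
  refine (hlog.sub (hasDerivAt_sum_Icc_pow_div K t)).congr_deriv ?_
  rw [geom_sum_eq (by linarith : -t ≠ 1)]
  field_simp
  ring

lemma logTaylorRemainder_eq_integral (K : ℕ) {t : ℝ} (ht : -1 < t) :
    logTaylorRemainder K t = ∫ s in (0 : ℝ)..t, (-s) ^ K / (1 + s) := by
  have hsub : ∀ s ∈ uIcc 0 t, -1 < s := fun s hs =>
    lt_of_lt_of_le (lt_min (by norm_num) ht) hs.1
  rw [integral_eq_sub_of_hasDerivAt (fun s hs => hasDerivAt_logTaylorRemainder K (hsub s hs))]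
  · have h0 : logTaylorRemainder K 0 = 0 := by
      simp only [logTaylorRemainder, add_zero, Real.log_one, zero_sub, neg_eq_zero]
      exact sum_eq_zero fun k hk => by simp [Nat.one_le_iff_ne_zero.1 (Finset.mem_Icc.1 hk).1]
    rw [h0, sub_zero]
  · refine ContinuousOn.intervalIntegrable fun s hs => ?_
    have : (1 : ℝ) + s ≠ 0 := by linarith [hsub s hs]
    fun_prop (disch := assumption)

lemma logTaylorRemainder_eq_mul_integral (K : ℕ) {t : ℝ} (ht : -1 < t) :
    logTaylorRemainder K t = (-t) ^ K * t * ∫ r in (0 : ℝ)..1, r ^ K / (1 + t * r) := by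
  have := smul_integral_comp_mul_left (fun s : ℝ => (-s) ^ K / (1 + s)) t (a := 0) (b := 1)
  rw [smul_eq_mul, mul_zero, mul_one] at this
  rw [logTaylorRemainder_eq_integral K ht, ← this, ← integral_const_mul, ← integral_const_mul]
  congr 1 with r
  rw [neg_mul_eq_neg_mul, mul_pow]
  ring

lemma antitoneOn_integral_pow_div_one_add_mul (K : ℕ) :
    AntitoneOn (fun t : ℝ => ∫ r in (0 : ℝ)..1, r ^ K / (1 + t * r)) (Ioi (-1)) := by
  have hpos : ∀ {t : ℝ}, -1 < t → ∀ r ∈ uIcc (0 : ℝ) 1, 0 < 1 + t * r := fun {t} ht r hr => by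
    rw [Set.uIcc_of_le zero_le_one] at hr
    rcases le_or_gt 0 t with h | h <;> nlinarith [hr.1, hr.2]
  have hint : ∀ {t : ℝ}, -1 < t → IntervalIntegrable (fun r : ℝ => r ^ K / (1 + t * r))
      MeasureTheory.volume 0 1 := fun {t} ht => by
    refine ContinuousOn.intervalIntegrable fun r hr => ?_
    have := (hpos ht r hr).ne'
    fun_prop (disch := assumption)
  intro t ht s hs hts
  refine integral_mono_on zero_le_one (hint hs) (hint ht) fun r hr => ?_
  have hr' : r ∈ uIcc (0 : ℝ) 1 := Icc_subset_uIcc hr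
  have := hpos ht r hr'
  gcongr
  · exact pow_nonneg hr.1 K
  · exact hr.1

lemma pow_mul_logTaylorRemainder_le {K : ℕ} (hK : Odd K) {x₀ u : ℝ} (hx₀ : -1 < x₀)
    (hle : x₀ ≤ u * x₀) :
    u ^ (K + 1) * logTaylorRemainder K x₀ ≤ logTaylorRemainder K (u * x₀) := by
  have hodd : ∀ {t : ℝ}, -1 < t →
      logTaylorRemainder K t = -(t ^ (K + 1) * ∫ r in (0 : ℝ)..1, r ^ K / (1 + t * r)) :=
    fun {t} ht => by rw [logTaylorRemainder_eq_mul_integral K ht, hK.neg_pow]; ring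
  have hx : -1 < u * x₀ := hx₀.trans_le hle
  rw [hodd hx₀, hodd hx, mul_neg, ← mul_assoc, ← mul_pow, neg_le_neg_iff]
  exact mul_le_mul_of_nonneg_left
    (antitoneOn_integral_pow_div_one_add_mul K hx₀ hx hle) (hK.add_one.pow_nonneg _)

lemma sum_add_pow_mul_log_le_log {K : ℕ} (hK : Odd K) {x₀ u : ℝ} (hx₀ : -1 < x₀)
    (hle : x₀ ≤ u * x₀) :
    ∑ k ∈ Icc 1 K, 1 / (k : ℝ) * (-x₀) ^ k * (u ^ (K + 1) - u ^ k) +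
      u ^ (K + 1) * Real.log (1 + x₀) ≤ Real.log (1 + u * x₀) := by
  have h := pow_mul_logTaylorRemainder_le hK hx₀ hle
  unfold logTaylorRemainder at h
  have hsum : ∑ k ∈ Icc 1 K, 1 / (k : ℝ) * (-x₀) ^ k * (u ^ (K + 1) - u ^ k) =
      ∑ k ∈ Icc 1 K, (-1 : ℝ) ^ (k + 1) * (u * x₀) ^ k / k -
        u ^ (K + 1) * ∑ k ∈ Icc 1 K, (-1 : ℝ) ^ (k + 1) * x₀ ^ k / k := by
    rw [mul_sum, ← sum_sub_distrib]
    refine sum_congr rfl fun k _ => ?_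
    rw [neg_pow, mul_pow]
    ring
  linarith

theorem log_wealth_lower_bound_general (n : ℕ) (hn : 1 ≤ n)
    (m : ℝ) (hm : m ∈ Set.Ioo (0 : ℝ) 1)
    (b : ℝ) (hb : b ∈ Set.Ico m 1) (y : ℝ) (hy : 0 ≤ y) :
    (∑ k ∈ Finset.Icc 1 (2 * n - 1),
        (1 / (k : ℝ)) * (1 - (1 - b) / (1 - m)) ^ k *
          ((1 - y / m) ^ (2 * n) - (1 - y / m) ^ k)) +
      (1 - y / m) ^ (2 * n) * Real.log ((1 - b) / (1 - m)) ≤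
    Real.log (b * (y / m) + (1 - b) * ((1 - y) / (1 - m))) := by
  obtain ⟨hm0, hm1⟩ := hm
  obtain ⟨hmb, hb1⟩ := hb
  have h1m : 1 - m ≠ 0 := by linarith
  set x₀ := (m - b) / (1 - m) with hx₀_def
  have hx₀ : -1 < x₀ := by rw [lt_div_iff₀ (by linarith)]; linarith
  have hle : x₀ ≤ (1 - y / m) * x₀ := by
    have : x₀ ≤ 0 := div_nonpos_of_nonpos_of_nonneg (by linarith) (by linarith)
    have : 0 ≤ y / m := div_nonneg hy hm0.le
    nlinarith
  have hdeg : 2 * n - 1 + 1 = 2 * n := by omega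
  have hbase : -x₀ = 1 - (1 - b) / (1 - m) := by rw [hx₀_def]; field_simp; ring
  have hlog : 1 + x₀ = (1 - b) / (1 - m) := by rw [hx₀_def]; field_simp; ring
  have hwealth : 1 + (1 - y / m) * x₀ = b * (y / m) + (1 - b) * ((1 - y) / (1 - m)) := by
    rw [hx₀_def]; field_simp; ring
  have h := sum_add_pow_mul_log_le_log (K := 2 * n - 1) ⟨n - 1, by omega⟩ hx₀ hle
  rwa [hdeg, hbase, hlog, hwealth] at h

/-- Higher-order lower bound on the log-wealth (Lemma 4.5, first case): for
`n ≥ 1`, `m ∈ (0,1)`, `b ∈ [m,1)`, and `y ≥ 0` (with the argument of the outer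
logarithm positive),
`log(b y/m + (1-b)(1-y)/(1-m)) ≥ ∑_{k=1}^{2n-1} (1/k)(1-(1-b)/(1-m))^k
  {(1-y/m)^{2n} - (1-y/m)^k} + (1-y/m)^{2n} log((1-b)/(1-m))`. -/
theorem log_wealth_lower_bound (n : ℕ) (hn : 1 ≤ n)
    (m : ℝ) (hm : m ∈ Set.Ioo (0 : ℝ) 1)
    (b : ℝ) (hb : b ∈ Set.Ico m 1) (y : ℝ) (hy : 0 ≤ y)
    (hpos : 0 < b * (y / m) + (1 - b) * ((1 - y) / (1 - m))) :
    (∑ k ∈ Finset.Icc 1 (2 * n - 1),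
        (1 / (k : ℝ)) * (1 - (1 - b) / (1 - m)) ^ k *
          ((1 - y / m) ^ (2 * n) - (1 - y / m) ^ k)) +
      (1 - y / m) ^ (2 * n) * Real.log ((1 - b) / (1 - m)) ≤
    Real.log (b * (y / m) + (1 - b) * ((1 - y) / (1 - m))) :=
  log_wealth_lower_bound_general n hn m hm b hb y hy
end

section
/- Let $\psi_t(x) := o_1^x o_2^{t-x} \frac{B(x+1/2, t-x+1/2)}{B(1/2,1/2)}$ for $x \in [0,t]$. Then for any $0 \le x \le t-1$: (i) $\psi_{t-1}(x) = \frac{1}{o_1}\psi_t(x+1) + \frac{1}{o_2}\psi_t(x)$, and (ii) the induced bet $b_t(x) := \frac{\frac{1}{o_1}\psi_t(x+1)}{\frac{1}{o_1}\psi_t(x+1) + \frac{1}{o_2}\psi_t(x)}$ equals $\frac{x + 1/2}{t}$, independent of $o_1$ and $o_2$ (the Krichevsky–Trofimov strategy). -/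
/-- The Beta function `B(a,c) = Γ(a)Γ(c)/Γ(a+c)`. -/
noncomputable def Bfun (a c : ℝ) : ℝ := Real.Gamma a * Real.Gamma c / Real.Gamma (a + c)

/-- The KT mixture potential `ψ_t(x) = o1^x o2^{t-x} B(x+1/2, t-x+1/2)/B(1/2,1/2)`. -/
noncomputable def ktPotential (o1 o2 : ℝ) (t : ℕ) (x : ℝ) : ℝ :=
  o1 ^ x * o2 ^ ((t : ℝ) - x) * (Bfun (x + 1 / 2) ((t : ℝ) - x + 1 / 2) / Bfun (1 / 2) (1 / 2))

/-- (i) The KT potential satisfies the consistency identity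
`ψ_{t-1}(x) = (1/o1) ψ_t(x+1) + (1/o2) ψ_t(x)`, and (ii) the induced bet
`b_t(x) = ((1/o1) ψ_t(x+1)) / ((1/o1) ψ_t(x+1) + (1/o2) ψ_t(x))` equals
`(x + 1/2)/t`, independent of the odds `o1, o2` (the Krichevsky–Trofimov
strategy). -/
theorem kt_potential_recursion (o1 o2 : ℝ) (ho1 : 0 < o1) (ho2 : 0 < o2)
    (t : ℕ) (ht : 1 ≤ t) (x : ℝ) (hx : 0 ≤ x) (hx' : x ≤ (t : ℝ) - 1) :
    ktPotential o1 o2 (t - 1) x =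
      (1 / o1) * ktPotential o1 o2 t (x + 1) + (1 / o2) * ktPotential o1 o2 t x ∧
    ((1 / o1) * ktPotential o1 o2 t (x + 1)) /
        ((1 / o1) * ktPotential o1 o2 t (x + 1) + (1 / o2) * ktPotential o1 o2 t x) =
      (x + 1 / 2) / t := by
  have htR : (1:ℝ) ≤ (t:ℝ) := by exact_mod_cast ht
  have ht0 : (t:ℝ) ≠ 0 := by linarith
  have hcast : ((t-1:ℕ):ℝ) = (t:ℝ) - 1 := by
    push_cast [Nat.cast_sub ht]; ring
  have hA : 0 < Real.Gamma (x + 1/2) := Real.Gamma_pos_of_pos (by linarith)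
  have hC : 0 < Real.Gamma ((t:ℝ) - x - 1/2) := Real.Gamma_pos_of_pos (by linarith)
  have hG : 0 < Real.Gamma (t:ℝ) := Real.Gamma_pos_of_pos (by linarith)
  have hB0 : 0 < Bfun (1/2) (1/2) := by
    unfold Bfun
    exact div_pos (mul_pos (Real.Gamma_pos_of_pos (by norm_num))
      (Real.Gamma_pos_of_pos (by norm_num))) (Real.Gamma_pos_of_pos (by norm_num))
  have e1 : Real.Gamma (x + 1 + 1/2) = (x + 1/2) * Real.Gamma (x + 1/2) := by
    rw [show x + 1 + 1/2 = (x + 1/2) + 1 by ring, Real.Gamma_add_one (by linarith)]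
  have e2 : Real.Gamma ((t:ℝ) - x + 1/2) = ((t:ℝ) - x - 1/2) * Real.Gamma ((t:ℝ) - x - 1/2) := by
    rw [show (t:ℝ) - x + 1/2 = ((t:ℝ) - x - 1/2) + 1 by ring, Real.Gamma_add_one (by linarith)]
  have e3 : Real.Gamma ((t:ℝ) + 1) = (t:ℝ) * Real.Gamma (t:ℝ) := Real.Gamma_add_one ht0
  have hr1 : o1 ^ (x + 1) = o1 ^ x * o1 := Real.rpow_add_one (ne_of_gt ho1) x
  have hr2 : o2 ^ ((t:ℝ) - x) = o2 ^ ((t:ℝ) - x - 1) * o2 := by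
    rw [← Real.rpow_add_one (ne_of_gt ho2)]; congr 1; ring
  have kA : ktPotential o1 o2 (t-1) x = o1 ^ x * o2 ^ ((t:ℝ) - x - 1) *
        (Real.Gamma (x + 1/2) * Real.Gamma ((t:ℝ) - x - 1/2) / Real.Gamma (t:ℝ) / Bfun (1/2) (1/2)) := by
    unfold ktPotential Bfun
    rw [hcast, show (t:ℝ) - 1 - x = (t:ℝ) - x - 1 by ring,
        show (t:ℝ) - x - 1 + 1/2 = (t:ℝ) - x - 1/2 by ring,
        show x + 1/2 + ((t:ℝ) - x - 1/2) = (t:ℝ) by ring]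
  have kB : ktPotential o1 o2 t (x+1) = o1 ^ x * o1 * o2 ^ ((t:ℝ) - x - 1) *
        ((x + 1/2) * (Real.Gamma (x + 1/2) * Real.Gamma ((t:ℝ) - x - 1/2)) / ((t:ℝ) * Real.Gamma (t:ℝ)) / Bfun (1/2) (1/2)) := by
    unfold ktPotential Bfun
    rw [show (t:ℝ) - (x+1) = (t:ℝ) - x - 1 by ring,
        show (t:ℝ) - x - 1 + 1/2 = (t:ℝ) - x - 1/2 by ring,
        show x + 1 + 1/2 + ((t:ℝ) - x - 1/2) = (t:ℝ) + 1 by ring,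
        e1, e3, hr1]
    ring
  have kC : ktPotential o1 o2 t x = o1 ^ x * (o2 ^ ((t:ℝ) - x - 1) * o2) *
        (Real.Gamma (x + 1/2) * (((t:ℝ) - x - 1/2) * Real.Gamma ((t:ℝ) - x - 1/2)) / ((t:ℝ) * Real.Gamma (t:ℝ)) / Bfun (1/2) (1/2)) := by
    unfold ktPotential Bfun
    rw [show x + 1/2 + ((t:ℝ) - x + 1/2) = (t:ℝ) + 1 by ring, e2, e3, hr2]
  have h1 : ktPotential o1 o2 (t - 1) x =
      (1 / o1) * ktPotential o1 o2 t (x + 1) + (1 / o2) * ktPotential o1 o2 t x := by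
    rw [kA, kB, kC]
    field_simp
    ring
  refine ⟨h1, ?_⟩
  have h1' : 0 < o1 ^ x := Real.rpow_pos_of_pos ho1 x
  have h2' : 0 < o2 ^ ((t:ℝ) - x - 1) := Real.rpow_pos_of_pos ho2 _
  have hpos : (0:ℝ) < o1 ^ x * o2 ^ ((t:ℝ) - x - 1) *
        (Real.Gamma (x + 1/2) * Real.Gamma ((t:ℝ) - x - 1/2) / Real.Gamma (t:ℝ) / Bfun (1/2) (1/2)) := by
    positivity
  rw [← h1, kA, kB, div_eq_div_iff (ne_of_gt hpos) ht0]
  field_simp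
end
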